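/- Let A ∈ ℝ^{n×d} of rank k with thin SVD A = U_A Σ_A V_Aᵀ, ω ≥ 1, B ∈ ℝ^{n×ω}, E = A A⁺ B − B, and let W ∈ ℝ^{r×n} satisfy: W U_A has rank k, ‖(W U_A)⁺‖₂ ≤ 1/(1 − √(k/r)), and ‖W E‖₂ ≤ (1 + √(ω/r))‖E‖₂. Then X̃_opt = (W A)⁺ W B satisfies ‖A X̃_opt − B‖₂² ≤ (1 + ((1 + √(ω/r))/(1 − √(k/r)))²)·‖A X_opt − B‖₂², where X_opt = A⁺B. -/
import Mathlib


open Matrix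

noncomputable def spec {m n : ℕ} (M : Matrix (Fin m) (Fin n) ℝ) : ℝ :=
  ‖LinearMap.toContinuousLinearMap (Matrix.toEuclideanLin M)‖

def IsPinv {m n : ℕ} (A : Matrix (Fin m) (Fin n) ℝ) (P : Matrix (Fin n) (Fin m) ℝ) : Prop :=
  A * P * A = A ∧ P * A * P = P ∧ (A * P)ᵀ = A * P ∧ (P * A)ᵀ = P * A

namespace SpecAux

noncomputable def clm {m n : ℕ} (M : Matrix (Fin m) (Fin n) ℝ) :
    EuclideanSpace ℝ (Fin n) →L[ℝ] EuclideanSpace ℝ (Fin m) :=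
  LinearMap.toContinuousLinearMap (Matrix.toEuclideanLin M)

lemma spec_eq_clm {m n : ℕ} (M : Matrix (Fin m) (Fin n) ℝ) : spec M = ‖clm M‖ := rfl

lemma spec_nonneg {m n : ℕ} (M : Matrix (Fin m) (Fin n) ℝ) : 0 ≤ spec M := norm_nonneg _

lemma clm_mul {m n p : ℕ} (M : Matrix (Fin m) (Fin n) ℝ) (N : Matrix (Fin n) (Fin p) ℝ) :
    clm (M * N) = (clm M).comp (clm N) := by
  apply ContinuousLinearMap.ext; intro x
  simp only [clm, ContinuousLinearMap.comp_apply, LinearMap.coe_toContinuousLinearMap']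
  simp [Matrix.toEuclideanLin_apply, Matrix.mulVec_mulVec]

lemma spec_mul_le {m n p : ℕ} (M : Matrix (Fin m) (Fin n) ℝ) (N : Matrix (Fin n) (Fin p) ℝ) :
    spec (M * N) ≤ spec M * spec N := by
  rw [spec_eq_clm, clm_mul]
  exact ContinuousLinearMap.opNorm_comp_le _ _

lemma spec_add_le {m n : ℕ} (M N : Matrix (Fin m) (Fin n) ℝ) :
    spec (M + N) ≤ spec M + spec N := by
  have : clm (M + N) = clm M + clm N := by
    simp [clm, map_add]
  rw [spec_eq_clm, this]
  exact norm_add_le _ _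

lemma clm_transpose {m n : ℕ} (M : Matrix (Fin m) (Fin n) ℝ) :
    clm Mᵀ = ContinuousLinearMap.adjoint (clm M) := by
  rw [clm, clm, ← Matrix.conjTranspose_eq_transpose_of_trivial,
    Matrix.toEuclideanLin_conjTranspose_eq_adjoint,
    LinearMap.adjoint_toContinuousLinearMap]

lemma spec_transpose_mul_self {m n : ℕ} (M : Matrix (Fin m) (Fin n) ℝ) :
    spec (Mᵀ * M) = spec M ^ 2 := by
  rw [spec_eq_clm, clm_mul, clm_transpose, spec_eq_clm, sq]
  exact ContinuousLinearMap.norm_adjoint_comp_self _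

lemma pinv_unique {m n : ℕ} {A : Matrix (Fin m) (Fin n) ℝ} {P Q : Matrix (Fin n) (Fin m) ℝ}
    (hP : IsPinv A P) (hQ : IsPinv A Q) : P = Q := by
  obtain ⟨hP1, hP2, hP3, hP4⟩ := hP
  obtain ⟨hQ1, hQ2, hQ3, hQ4⟩ := hQ
  have hAP : A * P = A * Q := by
    calc A * P = (A * P)ᵀ := hP3.symm
      _ = (A * Q * A * P)ᵀ := by rw [hQ1]
      _ = ((A * Q) * (A * P))ᵀ := by simp only [Matrix.mul_assoc]
      _ = (A * P)ᵀ * (A * Q)ᵀ := by rw [Matrix.transpose_mul]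
      _ = (A * P) * (A * Q) := by rw [hP3, hQ3]
      _ = (A * P * A) * Q := by simp only [Matrix.mul_assoc]
      _ = A * Q := by rw [hP1]
  have hPA : P * A = Q * A := by
    calc P * A = (P * A)ᵀ := hP4.symm
      _ = (P * (A * Q * A))ᵀ := by rw [hQ1]
      _ = ((P * A) * (Q * A))ᵀ := by simp only [Matrix.mul_assoc]
      _ = (Q * A)ᵀ * (P * A)ᵀ := by rw [Matrix.transpose_mul]
      _ = (Q * A) * (P * A) := by rw [hP4, hQ4]
      _ = Q * (A * P * A) := by simp only [Matrix.mul_assoc]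
      _ = Q * A := by rw [hP1]
  calc P = P * A * P := hP2.symm
    _ = P * (A * Q) := by simp only [Matrix.mul_assoc, hAP]
    _ = (Q * A) * Q := by rw [← Matrix.mul_assoc, hPA]
    _ = Q := hQ2

lemma mulVecLin_injective_of_rank {r k : ℕ} {M : Matrix (Fin r) (Fin k) ℝ}
    (h : M.rank = k) : Function.Injective M.mulVecLin := by
  rw [← LinearMap.ker_eq_bot]
  have hrk := LinearMap.finrank_range_add_finrank_ker M.mulVecLin
  rw [Module.finrank_fintype_fun_eq_card, Fintype.card_fin] at hrk
  have hr : Module.finrank ℝ (LinearMap.range M.mulVecLin) = k := h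
  rw [hr] at hrk
  have hker : Module.finrank ℝ (LinearMap.ker M.mulVecLin) = 0 := by omega
  exact Submodule.finrank_eq_zero.mp hker

lemma mul_left_cancel_of_rank {r k p : ℕ} {M : Matrix (Fin r) (Fin k) ℝ}
    (h : M.rank = k) {X Y : Matrix (Fin k) (Fin p) ℝ}
    (hXY : M * X = M * Y) : X = Y := by
  have hinj := mulVecLin_injective_of_rank h
  ext i j
  have hcol : M.mulVecLin (fun l => X l j) = M.mulVecLin (fun l => Y l j) := by
    funext a
    have := congrFun (congrFun hXY a) j
    simpa [Matrix.mulVecLin_apply, Matrix.mulVec, Matrix.mul_apply, dotProduct] using this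
  exact congrFun (hinj hcol) i

end SpecAux

open SpecAux in
theorem spectral_coreset_regression {n d ω r k : ℕ} (hr : k < r) (hω : 1 ≤ ω)
    (A : Matrix (Fin n) (Fin d) ℝ) (hkA : A.rank = k)
    (U : Matrix (Fin n) (Fin k) ℝ) (S : Matrix (Fin k) (Fin k) ℝ)
    (V : Matrix (Fin d) (Fin k) ℝ)
    (hSVD : A = U * S * Vᵀ) (hU : Uᵀ * U = 1) (hV : Vᵀ * V = 1)
    (hSdiag : S.IsDiag) (hSinv : IsUnit S.det)
    (B : Matrix (Fin n) (Fin ω) ℝ)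
    (Ap : Matrix (Fin d) (Fin n) ℝ) (hAp : IsPinv A Ap)
    (Xopt : Matrix (Fin d) (Fin ω) ℝ) (hXopt : Xopt = Ap * B)
    (E : Matrix (Fin n) (Fin ω) ℝ) (hE : E = A * (Ap * B) - B)
    (W : Matrix (Fin r) (Fin n) ℝ) (hrank : (W * U).rank = k)
    (Pwu : Matrix (Fin k) (Fin r) ℝ) (hPwu : IsPinv (W * U) Pwu)
    (hPwuNorm : spec Pwu ≤ 1 / (1 - Real.sqrt ((k : ℝ) / r)))
    (hWE : spec (W * E) ≤ (1 + Real.sqrt ((ω : ℝ) / r)) * spec E)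
    (Pwa : Matrix (Fin d) (Fin r) ℝ) (hPwa : IsPinv (W * A) Pwa)
    (Xt : Matrix (Fin d) (Fin ω) ℝ) (hXt : Xt = Pwa * (W * B)) :
    spec (A * Xt - B) ^ 2
      ≤ (1 + ((1 + Real.sqrt ((ω : ℝ) / r)) / (1 - Real.sqrt ((k : ℝ) / r))) ^ 2)
        * spec (A * Xopt - B) ^ 2 := by
  -- basic positivity facts
  have hrpos : (0 : ℝ) < r := by
    have : 0 < r := lt_of_le_of_lt (Nat.zero_le k) hr
    exact_mod_cast this
  have hsk1 : Real.sqrt ((k : ℝ) / r) < 1 := by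
    rw [show (1 : ℝ) = Real.sqrt 1 from Real.sqrt_one.symm]
    exact Real.sqrt_lt_sqrt (by positivity)
      (by rw [div_lt_one hrpos]; exact_mod_cast hr)
  have hd : 0 < 1 - Real.sqrt ((k : ℝ) / r) := by linarith
  -- S inverse facts
  have hS1 : S * S⁻¹ = 1 := Matrix.mul_nonsing_inv S hSinv
  have hS2 : S⁻¹ * S = 1 := Matrix.nonsing_inv_mul S hSinv
  have hST : Sᵀ = S := by
    ext i j
    by_cases hij : i = j
    · subst hij; rfl
    · rw [Matrix.transpose_apply, hSdiag (fun h => hij h.symm), hSdiag hij]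
  -- collapse lemmas
  have hUc : ∀ (p : ℕ) (M : Matrix (Fin k) (Fin p) ℝ), Uᵀ * (U * M) = M := by
    intro p M; rw [← Matrix.mul_assoc, hU, Matrix.one_mul]
  have hVc : ∀ (p : ℕ) (M : Matrix (Fin k) (Fin p) ℝ), Vᵀ * (V * M) = M := by
    intro p M; rw [← Matrix.mul_assoc, hV, Matrix.one_mul]
  have hS1c : ∀ (p : ℕ) (M : Matrix (Fin k) (Fin p) ℝ), S * (S⁻¹ * M) = M := by
    intro p M; rw [← Matrix.mul_assoc, hS1, Matrix.one_mul]
  have hS2c : ∀ (p : ℕ) (M : Matrix (Fin k) (Fin p) ℝ), S⁻¹ * (S * M) = M := by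
    intro p M; rw [← Matrix.mul_assoc, hS2, Matrix.one_mul]
  have hPwuWU : Pwu * (W * U) = 1 := by
    apply mul_left_cancel_of_rank hrank
    rw [Matrix.mul_one, ← Matrix.mul_assoc]
    exact hPwu.1
  have hPc : ∀ (p : ℕ) (M : Matrix (Fin k) (Fin p) ℝ), Pwu * (W * (U * M)) = M := by
    intro p M
    rw [show W * (U * M) = (W * U) * M from (Matrix.mul_assoc W U M).symm,
      ← Matrix.mul_assoc, hPwuWU, Matrix.one_mul]
  -- the pseudoinverse of W*A
  have h3 : W * A * (V * S⁻¹ * Pwu) = W * U * Pwu := by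
    simp only [hSVD, Matrix.mul_assoc, hVc, hS1c]
  have h4 : V * S⁻¹ * Pwu * (W * A) = V * Vᵀ := by
    simp only [hSVD, Matrix.mul_assoc, hPc, hS2c]
  have hPwa2 : IsPinv (W * A) (V * S⁻¹ * Pwu) := by
    refine ⟨?_, ?_, ?_, ?_⟩
    · simp only [hSVD, Matrix.mul_assoc, hVc, hS1c, hPc]
    · simp only [hSVD, Matrix.mul_assoc, hVc, hS1c, hS2c, hPc]
    · rw [h3]; exact hPwu.2.2.1
    · rw [h4, Matrix.transpose_mul, Matrix.transpose_transpose]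
  have hPwaEq : Pwa = V * S⁻¹ * Pwu := pinv_unique hPwa hPwa2
  -- the residual identity
  have key : A * (V * S⁻¹ * Pwu * (W * B)) = U * (Pwu * (W * B)) := by
    simp only [hSVD, Matrix.mul_assoc, hVc, hS1c]
  have key2 : U * (Pwu * (W * (A * (Ap * B)))) = A * (Ap * B) := by
    simp only [hSVD, Matrix.mul_assoc, hPc]
  have hBeq : B = A * (Ap * B) - E := by rw [hE, sub_sub_cancel]
  have hResid : A * Xt - B = E - U * (Pwu * (W * E)) := by
    rw [hXt, hPwaEq, key]
    conv_lhs => rw [hBeq]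
    rw [Matrix.mul_sub W, Matrix.mul_sub Pwu, Matrix.mul_sub U, key2]
    abel
  -- orthogonality
  have hAtE : Aᵀ * E = 0 := by
    have h1 : Aᵀ * (A * Ap) = Aᵀ := by
      calc Aᵀ * (A * Ap) = Aᵀ * (A * Ap)ᵀ := by rw [hAp.2.2.1]
        _ = (A * Ap * A)ᵀ := (Matrix.transpose_mul (A * Ap) A).symm
        _ = Aᵀ := by rw [hAp.1]
    have h2 : Aᵀ * (A * (Ap * B)) = (Aᵀ * (A * Ap)) * B := by
      simp only [Matrix.mul_assoc]
    rw [hE, Matrix.mul_sub, h2, h1, sub_self]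
  have hUE : Uᵀ * E = 0 := by
    have hAt : Aᵀ = V * (S * Uᵀ) := by
      rw [hSVD]
      simp only [Matrix.transpose_mul, Matrix.transpose_transpose, hST, Matrix.mul_assoc]
    have h2 : V * (S * (Uᵀ * E)) = 0 := by
      calc V * (S * (Uᵀ * E)) = Aᵀ * E := by rw [hAt]; simp only [Matrix.mul_assoc]
        _ = 0 := hAtE
    have h3 : S * (Uᵀ * E) = 0 := by
      have := congrArg (fun M => Vᵀ * M) h2
      simpa [← Matrix.mul_assoc, hV] using this
    have := congrArg (fun M => S⁻¹ * M) h3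
    simpa [← Matrix.mul_assoc, hS2] using this
  set N : Matrix (Fin n) (Fin ω) ℝ := U * (Pwu * (W * E)) with hN
  have hNtE : Nᵀ * E = 0 := by
    rw [hN]
    simp only [Matrix.transpose_mul, Matrix.mul_assoc, hUE]
    simp
  have hEtN : Eᵀ * N = 0 := by
    have := congrArg Matrix.transpose hNtE
    simpa [Matrix.transpose_mul, Matrix.transpose_transpose] using this
  -- Pythagoras
  have hMtM : (E - N)ᵀ * (E - N) = Eᵀ * E + Nᵀ * N := by
    rw [Matrix.transpose_sub, Matrix.sub_mul, Matrix.mul_sub, Matrix.mul_sub, hNtE, hEtN]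
    abel
  have hspec1 : spec (A * Xt - B) ^ 2 ≤ spec E ^ 2 + spec N ^ 2 := by
    rw [← spec_transpose_mul_self, hResid, hMtM]
    calc spec (Eᵀ * E + Nᵀ * N) ≤ spec (Eᵀ * E) + spec (Nᵀ * N) := spec_add_le _ _
      _ = spec E ^ 2 + spec N ^ 2 := by rw [spec_transpose_mul_self, spec_transpose_mul_self]
  -- bounding spec N
  have hNspec : spec N = spec (Pwu * (W * E)) := by
    have h1 : spec N ^ 2 = spec (Pwu * (W * E)) ^ 2 := by
      rw [← spec_transpose_mul_self N, ← spec_transpose_mul_self (Pwu * (W * E))]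
      congr 1
      rw [hN]
      simp only [Matrix.transpose_mul, Matrix.mul_assoc, hUc]
    rw [← Real.sqrt_sq (spec_nonneg N), h1, Real.sqrt_sq (spec_nonneg _)]
  have hNle : spec N ≤ (1 / (1 - Real.sqrt ((k : ℝ) / r))) *
      ((1 + Real.sqrt ((ω : ℝ) / r)) * spec E) := by
    rw [hNspec]
    calc spec (Pwu * (W * E)) ≤ spec Pwu * spec (W * E) := spec_mul_le _ _
      _ ≤ _ := mul_le_mul hPwuNorm hWE (spec_nonneg _) (le_of_lt (by positivity))
  have hEopt : A * Xopt - B = E := by rw [hXopt, hE]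
  rw [hEopt]
  have hN2 : spec N ^ 2 ≤ ((1 / (1 - Real.sqrt ((k : ℝ) / r))) *
      ((1 + Real.sqrt ((ω : ℝ) / r)) * spec E)) ^ 2 := by
    exact pow_le_pow_left₀ (spec_nonneg N) hNle 2
  have hexpand : (1 + ((1 + Real.sqrt ((ω : ℝ) / r)) / (1 - Real.sqrt ((k : ℝ) / r))) ^ 2) *
      spec E ^ 2 = spec E ^ 2 + ((1 / (1 - Real.sqrt ((k : ℝ) / r))) *
      ((1 + Real.sqrt ((ω : ℝ) / r)) * spec E)) ^ 2 := by
    ring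
  linarith [hspec1, hN2]
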